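/- arXiv:2510.14009 — 2 statements merged into one kernel-verified Lean document; each statement's English description precedes it below -/
import Mathlib

section
/- Under the layer-wise setup, let f : E → ℝ be differentiable and layer-wise L-smooth. Fix points X_t ∈ E, vectors B_t^ℓ ∈ E_ℓ, step sizes η_t^ℓ ≥ 0, and directions O_t^ℓ ∈ E_ℓ satisfying ‖O_t^ℓ‖_{(ℓ)} ≤ 1 and ⟨B_t^ℓ, O_t^ℓ⟩ = −‖B_t^ℓ‖_{(ℓ)*}, and define X_{t+1} by X_{t+1}^ℓ = X_t^ℓ + η_t^ℓ·O_t^ℓ for every layer ℓ. Then f(X_{t+1}) ≤ f(X_t) + Σ_{ℓ=1}^{p} ( −η_t^ℓ·‖∇_ℓ f(X_t)‖_{(ℓ)*} + 2·η_t^ℓ·‖B_t^ℓ − ∇_ℓ f(X_t)‖_{(ℓ)*} + (L_ℓ/2)·(η_t^ℓ)² ). -/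
/-!
Along the segment `t ↦ Xₜ + t D`, `D = Xₜ₊₁ - Xₜ`, layer-wise smoothness and `‖Oˡ‖ ≤ 1` give
`⟪∇f(Xₜ + sD) - ∇f(Xₜ), D⟫ ≤ s ∑ Lₗ ηₗ²`, which integrates to the quadratic upper bound
`f(Xₜ₊₁) ≤ f(Xₜ) + ⟪∇f(Xₜ), D⟫ + ½ ∑ Lₗ ηₗ²`. The linear term is controlled layer by layer:
`⟪G, O⟫ = ⟪B, O⟫ + ⟪G - B, O⟫ ≤ -‖B‖_* + ‖B - G‖_* ≤ -‖G‖_* + 2 ‖B - G‖_*`.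
-/

open scoped RealInnerProductSpace

/-- The dual norm of a (semi)norm `N` on a real inner product space:
`‖Y‖_* = sup { ⟪Y, X⟫ : N X ≤ 1 }`. -/
noncomputable def dualNorm {E : Type*} [NormedAddCommGroup E] [InnerProductSpace ℝ E]
    (N : E → ℝ) (Y : E) : ℝ :=
  sSup ((fun X => ⟪Y, X⟫) '' {X | N X ≤ 1})

open Set

theorem Seminorm.exists_norm_le_mul_of_finiteDimensional {E : Type*} [NormedAddCommGroup E]
    [NormedSpace ℝ E] [FiniteDimensional ℝ E] (N : Seminorm ℝ E) (hN : ∀ x, N x = 0 → x = 0) :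
    ∃ C, 0 ≤ C ∧ ∀ x, ‖x‖ ≤ C * N x := by
  have hcont : Continuous N := N.convexOn.locallyLipschitz.continuous
  obtain ⟨m, hm, hmN⟩ := (isCompact_sphere (0 : E) 1).exists_forall_le' hcont.continuousOn
    (a := 0) fun z hz => (apply_nonneg N z).lt_of_ne' fun h0 => by simp [hN z h0] at hz
  refine ⟨m⁻¹, inv_nonneg.2 hm.le, fun x => ?_⟩
  rcases eq_or_ne x 0 with rfl | hx
  · simp
  have hxn : 0 < ‖x‖ := norm_pos_iff.2 hx
  have h := hmN (‖x‖⁻¹ • x) (by simp [norm_smul, hxn.ne'])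
  rw [map_smul_eq_mul, norm_inv, norm_norm, le_inv_mul_iff₀ hxn] at h
  rw [le_inv_mul_iff₀ hm, mul_comm]
  exact h

section DualNorm

variable {E : Type*} [NormedAddCommGroup E] [InnerProductSpace ℝ E] {N : Seminorm ℝ E}

theorem dualNorm_le_of_forall_inner_le {Y : E} {c : ℝ} (h : ∀ X, N X ≤ 1 → ⟪Y, X⟫ ≤ c) :
    dualNorm N Y ≤ c :=
  csSup_le ⟨_, mem_image_of_mem _ (show N 0 ≤ 1 by simp)⟩ (forall_mem_image.2 h)

theorem dualNorm_neg (Y : E) : dualNorm N (-Y) = dualNorm N Y := by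
  have key : ∀ Z : E,
      (fun X => ⟪-Z, X⟫) '' {X | N X ≤ 1} ⊆ (fun X => ⟪Z, X⟫) '' {X | N X ≤ 1} := by
    rintro Z - ⟨X, hX, rfl⟩
    exact ⟨-X, by simpa using hX, by simp [inner_neg_left, inner_neg_right]⟩
  unfold dualNorm
  rw [(key Y).antisymm (by simpa using key (-Y))]

theorem dualNorm_sub_rev (Y Z : E) : dualNorm N (Y - Z) = dualNorm N (Z - Y) := by
  rw [← dualNorm_neg, neg_sub]

variable [FiniteDimensional ℝ E]

/-- Without definiteness or finite dimension the supremum defining `dualNorm` may be infinite,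
and then `sSup` returns the junk value `0`. -/
theorem bddAbove_inner_image_ball (hN : ∀ x, N x = 0 → x = 0) (Y : E) :
    BddAbove ((fun X => ⟪Y, X⟫) '' {X | N X ≤ 1}) := by
  obtain ⟨C, hC, hnorm⟩ := N.exists_norm_le_mul_of_finiteDimensional hN
  refine ⟨‖Y‖ * C, ?_⟩
  rintro - ⟨X, hX, rfl⟩
  calc ⟪Y, X⟫ ≤ ‖Y‖ * ‖X‖ := real_inner_le_norm Y X
    _ ≤ ‖Y‖ * (C * 1) := by gcongr; exact (hnorm X).trans (by gcongr; exact hX)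
    _ = ‖Y‖ * C := by rw [mul_one]

theorem inner_le_dualNorm (hN : ∀ x, N x = 0 → x = 0) (Y : E) {X : E} (hX : N X ≤ 1) :
    ⟪Y, X⟫ ≤ dualNorm N Y :=
  le_csSup (bddAbove_inner_image_ball hN Y) (mem_image_of_mem _ hX)

theorem dualNorm_add_le (hN : ∀ x, N x = 0 → x = 0) (Y Z : E) :
    dualNorm N (Y + Z) ≤ dualNorm N Y + dualNorm N Z :=
  dualNorm_le_of_forall_inner_le fun X hX => by
    rw [inner_add_left]
    exact add_le_add (inner_le_dualNorm hN Y hX) (inner_le_dualNorm hN Z hX)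

theorem inner_le_neg_dualNorm_add_two_mul_dualNorm_sub (hN : ∀ x, N x = 0 → x = 0) {B O : E}
    (hO : N O ≤ 1) (hBO : ⟪B, O⟫ = -dualNorm N B) (G : E) :
    ⟪G, O⟫ ≤ -dualNorm N G + 2 * dualNorm N (B - G) := by
  have hG : dualNorm N G ≤ dualNorm N B + dualNorm N (B - G) := by
    simpa [dualNorm_sub_rev G B] using dualNorm_add_le hN B (G - B)
  have hGB : ⟪G - B, O⟫ ≤ dualNorm N (B - G) :=
    dualNorm_sub_rev B G ▸ inner_le_dualNorm hN (G - B) hO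
  rw [inner_sub_left, hBO] at hGB
  linarith

end DualNorm

section Descent

variable {F : Type*} [NormedAddCommGroup F] [InnerProductSpace ℝ F] [CompleteSpace F]
  {f : F → ℝ}

theorem hasDerivAt_comp_add_smul_gradient (hf : Differentiable ℝ f) (x d : F) (t : ℝ) :
    HasDerivAt (fun t : ℝ => f (x + t • d)) ⟪gradient f (x + t • d), d⟫ t := by
  have hline : HasDerivAt (fun t : ℝ => x + t • d) d t := by
    simpa using ((hasDerivAt_id t).smul_const d).const_add x
  rw [inner_gradient_left]
  exact (hf _).hasFDerivAt.comp_hasDerivAt t hline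

theorem le_add_inner_gradient_add_of_inner_gradient_sub_le (hf : Differentiable ℝ f) {x d : F}
    {S : ℝ} (h : ∀ s ∈ Icc (0 : ℝ) 1, ⟪gradient f (x + s • d) - gradient f x, d⟫ ≤ s * S) :
    f (x + d) ≤ f x + ⟪gradient f x, d⟫ + S / 2 := by
  set φ : ℝ → ℝ := fun t => f (x + t • d) - t * ⟪gradient f x, d⟫ - t ^ 2 / 2 * S
  have hφ : ∀ t, HasDerivAt φ (⟪gradient f (x + t • d) - gradient f x, d⟫ - t * S) t := by
    intro t
    refine (((hasDerivAt_comp_add_smul_gradient hf x d t).sub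
      ((hasDerivAt_id t).mul_const _)).sub
        ((hasDerivAt_pow 2 t).div_const 2 |>.mul_const S)).congr_deriv ?_
    rw [inner_sub_left]
    simp
  have hanti : AntitoneOn φ (Icc 0 1) :=
    antitoneOn_of_hasDerivWithinAt_nonpos (convex_Icc 0 1)
      (continuous_iff_continuousAt.2 fun t => (hφ t).continuousAt).continuousOn
      (fun t _ => (hφ t).hasDerivWithinAt)
      (fun t ht => sub_nonpos.2 (h t (interior_subset ht)))
  have := hanti (left_mem_Icc.2 zero_le_one) (right_mem_Icc.2 zero_le_one) zero_le_one
  simp only [φ, zero_smul, add_zero, one_smul] at this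
  linarith

end Descent

theorem inner_gradient_sub_le_of_layerwise_smooth {ι : Type*} [Fintype ι] {E : ι → Type*}
    [∀ ℓ, NormedAddCommGroup (E ℓ)] [∀ ℓ, InnerProductSpace ℝ (E ℓ)]
    [∀ ℓ, FiniteDimensional ℝ (E ℓ)] {N : ∀ ℓ, Seminorm ℝ (E ℓ)}
    (hN : ∀ ℓ x, N ℓ x = 0 → x = 0) {f : PiLp 2 E → ℝ} {L : ι → ℝ} (hL : ∀ ℓ, 0 ≤ L ℓ)
    (hsmooth : ∀ ℓ (X Y : PiLp 2 E),
      dualNorm (N ℓ) (gradient f X ℓ - gradient f Y ℓ) ≤ L ℓ * N ℓ (X ℓ - Y ℓ))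
    {η : ι → ℝ} (hη : ∀ ℓ, 0 ≤ η ℓ) {O : ∀ ℓ, E ℓ} (hO : ∀ ℓ, N ℓ (O ℓ) ≤ 1)
    {d : PiLp 2 E} (hd : ∀ ℓ, d ℓ = η ℓ • O ℓ) (x : PiLp 2 E) {s : ℝ} (hs : 0 ≤ s) :
    ⟪gradient f (x + s • d) - gradient f x, d⟫ ≤ s * ∑ ℓ, L ℓ * η ℓ ^ 2 := by
  rw [PiLp.inner_apply, Finset.mul_sum]
  refine Finset.sum_le_sum fun ℓ _ => ?_
  simp only [PiLp.sub_apply, hd, inner_smul_right]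
  calc η ℓ * ⟪gradient f (x + s • d) ℓ - gradient f x ℓ, O ℓ⟫
      ≤ η ℓ * (L ℓ * N ℓ ((x + s • d) ℓ - x ℓ)) := by
        gcongr
        · exact hη ℓ
        · exact (inner_le_dualNorm (hN ℓ) _ (hO ℓ)).trans (hsmooth ℓ _ _)
    _ = η ℓ * (L ℓ * (s * η ℓ * N ℓ (O ℓ))) := by
        simp [hd, map_smul_eq_mul, abs_of_nonneg hs, abs_of_nonneg (hη ℓ), mul_assoc]
    _ ≤ η ℓ * (L ℓ * (s * η ℓ * 1)) := by
        gcongr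
        exacts [hη ℓ, hL ℓ, mul_nonneg hs (hη ℓ), hO ℓ]
    _ = s * (L ℓ * η ℓ ^ 2) := by ring

/-- One-step descent lemma for LMO-based layer-wise updates. -/
theorem stmt_1 {p : ℕ} {E : Fin p → Type*}
    [∀ ℓ, NormedAddCommGroup (E ℓ)] [∀ ℓ, InnerProductSpace ℝ (E ℓ)]
    [∀ ℓ, FiniteDimensional ℝ (E ℓ)]
    (N : ∀ ℓ, Seminorm ℝ (E ℓ)) (hNdef : ∀ ℓ x, N ℓ x = 0 → x = 0)
    (f : PiLp 2 E → ℝ) (hf : Differentiable ℝ f)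
    (L : Fin p → ℝ) (hL : ∀ ℓ, 0 ≤ L ℓ)
    (hsmooth : ∀ ℓ (X Y : PiLp 2 E),
      dualNorm (N ℓ) (gradient f X ℓ - gradient f Y ℓ) ≤ L ℓ * N ℓ (X ℓ - Y ℓ))
    (Xt Xt1 : PiLp 2 E) (B O : ∀ ℓ, E ℓ) (η : Fin p → ℝ)
    (hη : ∀ ℓ, 0 ≤ η ℓ)
    (hO_ball : ∀ ℓ, N ℓ (O ℓ) ≤ 1)
    (hO_lmo : ∀ ℓ, ⟪B ℓ, O ℓ⟫ = -dualNorm (N ℓ) (B ℓ))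
    (hupd : ∀ ℓ, Xt1 ℓ = Xt ℓ + η ℓ • O ℓ) :
    f Xt1 ≤ f Xt + ∑ ℓ,
      (-(η ℓ) * dualNorm (N ℓ) (gradient f Xt ℓ)
        + 2 * η ℓ * dualNorm (N ℓ) (B ℓ - gradient f Xt ℓ)
        + L ℓ / 2 * η ℓ ^ 2) := by
  have hd : ∀ ℓ, (Xt1 - Xt) ℓ = η ℓ • O ℓ := fun ℓ => by simp [hupd ℓ]
  have hdescent := le_add_inner_gradient_add_of_inner_gradient_sub_le hf (x := Xt)
    fun s hs => inner_gradient_sub_le_of_layerwise_smooth hNdef hL hsmooth hη hO_ball hd Xt hs.1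
  have hlinear : ⟪gradient f Xt, Xt1 - Xt⟫ = ∑ ℓ, η ℓ * ⟪gradient f Xt ℓ, O ℓ⟫ := by
    simp only [PiLp.inner_apply, hd, inner_smul_right]
  rw [add_sub_cancel, hlinear] at hdescent
  calc f Xt1 ≤ f Xt + ∑ ℓ, (η ℓ * ⟪gradient f Xt ℓ, O ℓ⟫ + L ℓ / 2 * η ℓ ^ 2) := by
        simpa only [Finset.sum_add_distrib, Finset.sum_div, mul_div_right_comm, add_assoc]
          using hdescent
    _ ≤ _ := by
        gcongr with ℓ
        have hlmo := mul_le_mul_of_nonneg_left (inner_le_neg_dualNorm_add_two_mul_dualNorm_sub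
          (hNdef ℓ) (hO_ball ℓ) (hO_lmo ℓ) (gradient f Xt ℓ)) (hη ℓ)
        linarith
end

section
/- Let X₁, …, X_T be a martingale difference sequence adapted to a filtration ℱ₁, …, ℱ_T, taking values in a real Hilbert space, such that ‖X_t‖ ≤ R_t almost surely for constants R_t ≥ 0. Then for any δ ∈ (0,1) and any fixed 1 ≤ t ≤ T, with probability at least 1 − δ: ‖Σ_{s=1}^{t} X_s‖ ≤ 4·√( log(2/δ)·Σ_{s=1}^{T} R_s² ). -/
/-!
Pinelis' argument for vector-valued martingales. Let `‖x‖ ≤ R`. Since `u ↦ cosh √u` is convex,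
interpolating `l² ‖a + x‖² ≤ l² (‖a‖² + 2 ⟪a, x⟫ + R²)` between `(l (‖a‖ - R))²` and
`(l (‖a‖ + R))²` gives `cosh (l ‖a + x‖) ≤ cosh (l ‖a‖) cosh (l R) + ⟪Y, x⟫` with `Y` a
measurable function of `a`. Applied to `a = S_{n-1}`, `x = X_n`, the inner product has mean zero, so
`𝔼 cosh (l ‖S_t‖) ≤ ∏ cosh (l R_s) ≤ exp (l² V / 2)` with `V = ∑ R_s²`. Markov's inequality
and `cosh y ≥ eʸ / 2` give `ℙ(‖S_t‖ > a) ≤ 2 exp (l² V / 2 - l a)`; with `a = 4 √(L V)`,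
`L = log (2 / δ)` and `l = √(L / V)` the exponent is `-7L/2 ≤ -L`.
-/

open MeasureTheory Finset Real

namespace Real

lemma convexOn_sinh_Ici : ConvexOn ℝ (Set.Ici 0) sinh := by
  refine MonotoneOn.convexOn_of_deriv (convex_Ici 0) continuous_sinh.continuousOn
    differentiable_sinh.differentiableOn ?_
  rw [deriv_sinh, interior_Ici]
  intro x hx y hy hxy
  rw [cosh_le_cosh, abs_of_pos hx, abs_of_pos hy]
  exact hxy

lemma monotoneOn_sinh_div_self : MonotoneOn (fun s ↦ sinh s / s) (Set.Ioi 0) := by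
  have h := convexOn_sinh_Ici.slope_mono (Set.self_mem_Ici (a := (0 : ℝ)))
  rw [Set.Ici_sdiff_left] at h
  refine h.congr fun s _ ↦ ?_
  simp [slope_def_field]

lemma hasDerivAt_cosh_sqrt {u : ℝ} (hu : 0 < u) :
    HasDerivAt (fun v ↦ cosh √v) (sinh √u / √u / 2) u :=
  ((hasDerivAt_cosh √u).comp u (hasDerivAt_sqrt hu.ne')).congr_deriv (by field_simp)

lemma convexOn_cosh_sqrt : ConvexOn ℝ (Set.Ici 0) (fun u ↦ cosh √u) := by
  have hderiv : Set.EqOn (deriv fun v ↦ cosh √v) (fun u ↦ sinh √u / √u / 2) (Set.Ioi 0) :=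
    fun u hu ↦ (hasDerivAt_cosh_sqrt hu).deriv
  refine MonotoneOn.convexOn_of_deriv (convex_Ici 0) (by fun_prop) ?_ ?_ <;> rw [interior_Ici]
  · exact fun u hu ↦ (hasDerivAt_cosh_sqrt hu).differentiableAt.differentiableWithinAt
  · refine MonotoneOn.congr ?_ hderiv.symm
    intro u hu v hv huv
    have := monotoneOn_sinh_div_self (sqrt_pos.2 hu) (sqrt_pos.2 hv) (sqrt_le_sqrt huv)
    dsimp only at this ⊢
    linarith

lemma cosh_sqrt_sq (y : ℝ) : cosh √(y ^ 2) = cosh y := by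
  rw [sqrt_sq_eq_abs, cosh_abs]

/-- For `N * R = 0` the coefficient of `c` is `0` by Lean's convention `x / 0 = 0`; then `c = 0`
too and the bound reads `cosh (l s) ≤ cosh (l (N + R))`. -/
lemma cosh_mul_le_of_sq_le {l N R c s : ℝ} (hN : 0 ≤ N) (hR : 0 ≤ R) (hc : |c| ≤ N * R)
    (hs : s ^ 2 ≤ N ^ 2 + 2 * c + R ^ 2) :
    cosh (l * s) ≤ cosh (l * N) * cosh (l * R) + sinh (l * N) * sinh (l * R) / (N * R) * c := by
  have hcosh_add :
      cosh (l * (N + R)) = cosh (l * N) * cosh (l * R) + sinh (l * N) * sinh (l * R) := by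
    rw [mul_add, cosh_add]
  have hcosh_sub :
      cosh (l * (N - R)) = cosh (l * N) * cosh (l * R) - sinh (l * N) * sinh (l * R) := by
    rw [mul_sub, cosh_sub]
  rcases (mul_nonneg hN hR).eq_or_lt with hNR | hNR
  · have hsinh : sinh (l * N) * sinh (l * R) = 0 := by
      rcases mul_eq_zero.1 hNR.symm with h | h <;> simp [h]
    have hc0 : c ≤ 0 := le_abs_self c |>.trans (hNR ▸ hc)
    rw [← hNR, div_zero, zero_mul, add_zero]
    calc cosh (l * s) ≤ cosh (l * (N + R)) := by
          rw [cosh_le_cosh, ← sq_le_sq, mul_pow, mul_pow]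
          exact mul_le_mul_of_nonneg_left (by nlinarith) (sq_nonneg l)
      _ = cosh (l * N) * cosh (l * R) := by rw [hcosh_add, hsinh, add_zero]
  · -- `θ` makes `l² (N² + 2c + R²)` the `θ`-interpolation of `(l (N - R))²` and `(l (N + R))²`.
    set θ := (N * R + c) / (2 * (N * R))
    have hθ0 : 0 ≤ θ := div_nonneg (by linarith [neg_abs_le c]) (by positivity)
    have hθ1 : 0 ≤ 1 - θ := by
      rw [sub_nonneg, div_le_one (by positivity)]
      linarith [le_abs_self c]
    have h2θ' : (2 * θ - 1) * (N * R) = c := by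
      linear_combination div_mul_cancel₀ (N * R + c) (by positivity : 2 * (N * R) ≠ 0)
    have h2θ : 2 * θ - 1 = c / (N * R) := by rw [eq_div_iff hNR.ne', h2θ']
    have hconv := convexOn_cosh_sqrt.2 (sq_nonneg (l * (N - R))) (sq_nonneg (l * (N + R)))
      hθ1 hθ0 (by ring)
    simp only [smul_eq_mul, cosh_sqrt_sq] at hconv
    calc cosh (l * s)
        ≤ cosh √((1 - θ) * (l * (N - R)) ^ 2 + θ * (l * (N + R)) ^ 2) := by
          rw [cosh_le_cosh, abs_of_nonneg (sqrt_nonneg _)]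
          refine abs_le_sqrt ?_
          rw [mul_pow]
          linear_combination (l ^ 2) * hs - (2 * l ^ 2) * h2θ'
      _ ≤ (1 - θ) * cosh (l * (N - R)) + θ * cosh (l * (N + R)) := hconv
      _ = cosh (l * N) * cosh (l * R) + sinh (l * N) * sinh (l * R) / (N * R) * c := by
          rw [hcosh_add, hcosh_sub]
          linear_combination (sinh (l * N) * sinh (l * R)) * h2θ

lemma prod_cosh_le_exp_sum {ι : Type*} (s : Finset ι) (x : ι → ℝ) :
    ∏ i ∈ s, cosh (x i) ≤ exp ((∑ i ∈ s, x i ^ 2) / 2) := by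
  rw [sum_div, exp_sum]
  exact prod_le_prod (fun i _ ↦ (cosh_pos _).le) fun i _ ↦ cosh_le_exp_half_sq _

end Real

lemma abs_div_mul_le_of_abs_le {K D c : ℝ} (hK : 0 ≤ K) (hc : |c| ≤ D) : |K / D * c| ≤ K := by
  rcases (abs_nonneg c |>.trans hc).eq_or_lt with h | h
  · simp [← h, hK]
  · rw [abs_mul, abs_div, abs_of_nonneg hK, abs_of_pos h, div_mul_eq_mul_div,
      div_le_iff₀ h]
    exact mul_le_mul_of_nonneg_left hc hK

section Measure

variable {Ω : Type*} {m0 : MeasurableSpace Ω} {P : Measure Ω}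

lemma measureReal_lt_le_integral_cosh [IsFiniteMeasure P] {f : Ω → ℝ} {l a : ℝ}
    (hl : 0 ≤ l) (ha : 0 ≤ a) (hf : Integrable (fun ω ↦ cosh (l * f ω)) P) :
    P.real {ω | a < f ω} ≤ 2 * exp (-(l * a)) * ∫ ω, cosh (l * f ω) ∂P := by
  have hsub : {ω | a < f ω} ⊆ {ω | cosh (l * a) ≤ cosh (l * f ω)} := by
    intro ω (hω : a < f ω)
    rw [Set.mem_ofPred, cosh_le_cosh, abs_of_nonneg (by positivity),
      abs_of_nonneg (by nlinarith)]
    exact mul_le_mul_of_nonneg_left hω.le hl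
  have hmarkov := mul_meas_ge_le_integral_of_nonneg
    (Filter.Eventually.of_forall fun ω ↦ (cosh_pos (l * f ω)).le) hf (cosh (l * a))
  have hcosh : 1 ≤ 2 * exp (-(l * a)) * cosh (l * a) := by
    have h : exp (-(l * a)) * exp (l * a) = 1 := by rw [← exp_add, neg_add_cancel, exp_zero]
    rw [cosh_eq]
    nlinarith [sq_nonneg (exp (-(l * a)))]
  calc P.real {ω | a < f ω} ≤ 2 * exp (-(l * a)) * cosh (l * a) * P.real {ω | a < f ω} :=
        le_mul_of_one_le_left measureReal_nonneg hcosh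
    _ ≤ 2 * exp (-(l * a)) * (cosh (l * a) * P.real {ω | cosh (l * a) ≤ cosh (l * f ω)}) := by
        rw [mul_assoc]
        gcongr
        exact measure_ne_top P _
    _ ≤ 2 * exp (-(l * a)) * ∫ ω, cosh (l * f ω) ∂P :=
        mul_le_mul_of_nonneg_left hmarkov (by positivity)

lemma ofReal_one_sub_le_measure [IsProbabilityMeasure P] {s : Set Ω} {δ : ℝ}
    (h : P.real sᶜ ≤ δ) : ENNReal.ofReal (1 - δ) ≤ P s := by
  have hδ : 0 ≤ δ := measureReal_nonneg.trans h
  have hcompl : P sᶜ ≤ ENNReal.ofReal δ := by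
    rw [← ofReal_measureReal (μ := P) (s := sᶜ)]
    exact ENNReal.ofReal_le_ofReal h
  rw [ENNReal.ofReal_sub _ hδ, ENNReal.ofReal_one, tsub_le_iff_right]
  calc 1 = P Set.univ := measure_univ.symm
    _ ≤ P s + P sᶜ := measure_univ_le_add_compl s
    _ ≤ P s + ENNReal.ofReal δ := by gcongr

lemma ae_norm_sum_Icc_le {E : Type*} [NormedAddCommGroup E] {T : ℕ} {X : ℕ → Ω → E}
    {R : ℕ → ℝ} (hbd : ∀ t, 1 ≤ t → t ≤ T → ∀ᵐ ω ∂P, ‖X t ω‖ ≤ R t) {n : ℕ} (hn : n ≤ T) :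
    ∀ᵐ ω ∂P, ‖∑ s ∈ Icc 1 n, X s ω‖ ≤ ∑ s ∈ Icc 1 n, R s := by
  have hall : ∀ᵐ ω ∂P, ∀ s ∈ Icc 1 n, ‖X s ω‖ ≤ R s :=
    Filter.eventually_all_finset _ |>.2 fun s hs ↦
      hbd s (mem_Icc.1 hs).1 ((mem_Icc.1 hs).2.trans hn)
  filter_upwards [hall] with ω hω
  exact (norm_sum_le _ _).trans (sum_le_sum hω)

lemma ae_sum_Icc_eq_zero {E : Type*} [NormedAddCommGroup E] {T : ℕ} {X : ℕ → Ω → E}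
    {R : ℕ → ℝ} (hbd : ∀ t, 1 ≤ t → t ≤ T → ∀ᵐ ω ∂P, ‖X t ω‖ ≤ R t)
    (hR : ∑ s ∈ Icc 1 T, R s ^ 2 = 0) {n : ℕ} (hn : n ≤ T) :
    ∀ᵐ ω ∂P, ∑ s ∈ Icc 1 n, X s ω = 0 := by
  have hR0 : ∀ s ∈ Icc 1 n, R s = 0 := fun s hs ↦ pow_eq_zero_iff two_ne_zero |>.1 <|
    (sum_eq_zero_iff_of_nonneg fun _ _ ↦ sq_nonneg _).1 hR s (Icc_subset_Icc_right hn hs)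
  filter_upwards [ae_norm_sum_Icc_le hbd hn] with ω hω
  rwa [sum_eq_zero hR0, norm_le_zero_iff] at hω

end Measure

section Hilbert

variable {H : Type*} [NormedAddCommGroup H] [InnerProductSpace ℝ H]

lemma cosh_mul_norm_add_le (l : ℝ) {R : ℝ} (a : H) {x : H} (hx : ‖x‖ ≤ R) :
    cosh (l * ‖a + x‖) ≤ cosh (l * ‖a‖) * cosh (l * R)
      + sinh (l * ‖a‖) * sinh (l * R) / (‖a‖ * R) * inner ℝ a x := by
  refine cosh_mul_le_of_sq_le (norm_nonneg a) ((norm_nonneg x).trans hx)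
    ((abs_real_inner_le_norm a x).trans (by gcongr)) ?_
  rw [norm_add_sq_real]
  gcongr

variable [CompleteSpace H] {Ω : Type*} {m m0 : MeasurableSpace Ω} {P : Measure Ω}

lemma integral_inner_eq_zero_of_condExp_eq_zero (hm : m ≤ m0) [SigmaFinite (P.trim hm)]
    {X Y : Ω → H} (hX : Integrable X P) (hXm : P[X | m] =ᵐ[P] 0) (hY : StronglyMeasurable[m] Y)
    (hYX : Integrable (fun ω ↦ inner ℝ (Y ω) (X ω)) P) :
    ∫ ω, inner ℝ (Y ω) (X ω) ∂P = 0 := by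
  have hpull := condExp_bilin_of_stronglyMeasurable_left (innerSL ℝ) hY hYX hX
  calc ∫ ω, inner ℝ (Y ω) (X ω) ∂P = ∫ ω, (P[fun ω ↦ inner ℝ (Y ω) (X ω) | m]) ω ∂P :=
        (integral_condExp hm).symm
    _ = ∫ ω, inner ℝ (Y ω) ((P[X | m]) ω) ∂P := integral_congr_ae hpull
    _ = 0 := integral_eq_zero_of_ae (hXm.mono fun ω h ↦ by simp [h])

lemma integral_cosh_mul_norm_add_le (hm : m ≤ m0) [IsFiniteMeasure P] {Z X : Ω → H} {l R : ℝ}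
    (hl : 0 ≤ l) (hZ : StronglyMeasurable[m] Z)
    (hZint : Integrable (fun ω ↦ cosh (l * ‖Z ω‖)) P) (hX : Integrable X P)
    (hXm : P[X | m] =ᵐ[P] 0) (hXR : ∀ᵐ ω ∂P, ‖X ω‖ ≤ R) :
    Integrable (fun ω ↦ cosh (l * ‖Z ω + X ω‖)) P ∧
      ∫ ω, cosh (l * ‖Z ω + X ω‖) ∂P ≤ cosh (l * R) * ∫ ω, cosh (l * ‖Z ω‖) ∂P := by
  have := isFiniteMeasure_trim (μ := P) hm
  set Y : Ω → H := fun ω ↦ (sinh (l * ‖Z ω‖) * sinh (l * R) / (‖Z ω‖ * R)) • Z ω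
  have hY : StronglyMeasurable[m] Y :=
    ((by fun_prop : Measurable fun N : ℝ ↦ sinh (l * N) * sinh (l * R) / (N * R)).comp
      hZ.norm.measurable).stronglyMeasurable.smul hZ
  have hchord : ∀ᵐ ω ∂P, cosh (l * ‖Z ω + X ω‖)
      ≤ cosh (l * ‖Z ω‖) * cosh (l * R) + inner ℝ (Y ω) (X ω) := by
    filter_upwards [hXR] with ω hω
    rw [real_inner_smul_left]
    exact cosh_mul_norm_add_le l (Z ω) hω
  have hYX : Integrable (fun ω ↦ inner ℝ (Y ω) (X ω)) P := by
    refine (hZint.const_mul (sinh (l * R))).mono'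
      ((hY.mono hm).aestronglyMeasurable.inner hX.aestronglyMeasurable) ?_
    filter_upwards [hXR] with ω hω
    have hR : 0 ≤ R := (norm_nonneg _).trans hω
    rw [real_inner_smul_left, Real.norm_eq_abs]
    calc _ ≤ sinh (l * ‖Z ω‖) * sinh (l * R) :=
          abs_div_mul_le_of_abs_le (by positivity)
            ((abs_real_inner_le_norm _ _).trans (by gcongr))
      _ ≤ sinh (l * R) * cosh (l * ‖Z ω‖) := by
          rw [mul_comm]
          gcongr
          exact (sinh_lt_cosh _).le
  have hbound_int := (hZint.mul_const (cosh (l * R))).add hYX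
  have hint : Integrable (fun ω ↦ cosh (l * ‖Z ω + X ω‖)) P := by
    refine hbound_int.mono' (continuous_cosh.comp_aestronglyMeasurable
      (((hZ.mono hm).aestronglyMeasurable.add hX.aestronglyMeasurable).norm.const_mul l)) ?_
    filter_upwards [hchord] with ω hω
    rwa [Real.norm_eq_abs, abs_of_pos (cosh_pos _)]
  refine ⟨hint, ?_⟩
  calc ∫ ω, cosh (l * ‖Z ω + X ω‖) ∂P
      ≤ ∫ ω, (cosh (l * ‖Z ω‖) * cosh (l * R) + inner ℝ (Y ω) (X ω)) ∂P :=
        integral_mono_ae hint hbound_int hchord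
    _ = cosh (l * R) * ∫ ω, cosh (l * ‖Z ω‖) ∂P := by
        rw [integral_add (hZint.mul_const _) hYX, integral_mul_const,
          integral_inner_eq_zero_of_condExp_eq_zero hm hX hXm hY hYX, add_zero, mul_comm]

lemma integral_cosh_mul_norm_sum_le [IsProbabilityMeasure P] {T : ℕ} {ℱ : Filtration ℕ m0}
    {X : ℕ → Ω → H} (hadapt : ∀ t, 1 ≤ t → t ≤ T → StronglyMeasurable[ℱ t] (X t))
    (hint : ∀ t, 1 ≤ t → t ≤ T → Integrable (X t) P)
    (hmds : ∀ t, 1 ≤ t → t ≤ T → P[X t | ℱ (t - 1)] =ᵐ[P] 0)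
    {R : ℕ → ℝ} (hbd : ∀ t, 1 ≤ t → t ≤ T → ∀ᵐ ω ∂P, ‖X t ω‖ ≤ R t)
    {l : ℝ} (hl : 0 ≤ l) {n : ℕ} (hn : n ≤ T) :
    Integrable (fun ω ↦ cosh (l * ‖∑ s ∈ Icc 1 n, X s ω‖)) P ∧
      ∫ ω, cosh (l * ‖∑ s ∈ Icc 1 n, X s ω‖) ∂P ≤ ∏ s ∈ Icc 1 n, cosh (l * R s) := by
  induction n with
  | zero => simp
  | succ n ih =>
    have hS : StronglyMeasurable[ℱ n] fun ω ↦ ∑ s ∈ Icc 1 n, X s ω := by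
      refine stronglyMeasurable_fun_sum _ fun s hs ↦ ?_
      have hs := mem_Icc.1 hs
      exact (hadapt s hs.1 (by omega)).mono (ℱ.mono hs.2)
    have hmds' : P[X (n + 1) | ℱ n] =ᵐ[P] 0 := by
      simpa using hmds (n + 1) (by omega) hn
    obtain ⟨hint', hle⟩ := integral_cosh_mul_norm_add_le (ℱ.le n) hl hS (ih (by omega)).1
      (hint (n + 1) (by omega) hn) hmds' (hbd (n + 1) (by omega) hn)
    simp only [sum_Icc_succ_top (by omega : 1 ≤ n + 1),
      prod_Icc_succ_top (by omega : 1 ≤ n + 1)]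
    refine ⟨hint', hle.trans ?_⟩
    rw [mul_comm]
    exact mul_le_mul_of_nonneg_right (ih (by omega)).2 (cosh_pos _).le

lemma measureReal_lt_norm_sum_le [IsProbabilityMeasure P] {T : ℕ} {ℱ : Filtration ℕ m0}
    {X : ℕ → Ω → H} (hadapt : ∀ t, 1 ≤ t → t ≤ T → StronglyMeasurable[ℱ t] (X t))
    (hint : ∀ t, 1 ≤ t → t ≤ T → Integrable (X t) P)
    (hmds : ∀ t, 1 ≤ t → t ≤ T → P[X t | ℱ (t - 1)] =ᵐ[P] 0)
    {R : ℕ → ℝ} (hbd : ∀ t, 1 ≤ t → t ≤ T → ∀ᵐ ω ∂P, ‖X t ω‖ ≤ R t)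
    {l a : ℝ} (hl : 0 ≤ l) (ha : 0 ≤ a) {n : ℕ} (hn : n ≤ T) :
    P.real {ω | a < ‖∑ s ∈ Icc 1 n, X s ω‖}
      ≤ 2 * exp (l ^ 2 * (∑ s ∈ Icc 1 T, R s ^ 2) / 2 - l * a) := by
  obtain ⟨hint, hle⟩ := integral_cosh_mul_norm_sum_le hadapt hint hmds hbd hl hn
  have hexp : ∏ s ∈ Icc 1 n, cosh (l * R s) ≤ exp (l ^ 2 * (∑ s ∈ Icc 1 T, R s ^ 2) / 2) := by
    refine (prod_cosh_le_exp_sum _ _).trans (exp_le_exp.2 ?_)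
    simp_rw [mul_pow, ← mul_sum]
    gcongr
  calc P.real {ω | a < ‖∑ s ∈ Icc 1 n, X s ω‖}
      ≤ 2 * exp (-(l * a)) * exp (l ^ 2 * (∑ s ∈ Icc 1 T, R s ^ 2) / 2) :=
        (measureReal_lt_le_integral_cosh hl ha hint).trans (by gcongr; exact hle.trans hexp)
    _ = 2 * exp (l ^ 2 * (∑ s ∈ Icc 1 T, R s ^ 2) / 2 - l * a) := by
        rw [mul_assoc, ← exp_add, neg_add_eq_sub]

end Hilbert

/-- The exponent of `measureReal_lt_norm_sum_le` at `l = √(L / V)`, `a = 4 √(L V)` is `-7L/2`. -/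
lemma sqrt_div_sq_mul_div_two_sub_le_neg {L V : ℝ} (hL : 0 ≤ L) (hV : 0 < V) :
    √(L / V) ^ 2 * V / 2 - √(L / V) * (4 * √(L * V)) ≤ -L := by
  have hsq : √(L / V) ^ 2 * V = L := by rw [sq_sqrt (by positivity)]; field_simp
  have hmul : √(L / V) * √(L * V) = L := by
    rw [← sqrt_mul (by positivity), show L / V * (L * V) = L ^ 2 by field_simp, sqrt_sq hL]
  rw [hsq, mul_left_comm, hmul]
  linarith

theorem stmt_8_general {Ω : Type*} {m0 : MeasurableSpace Ω} {P : Measure Ω} [IsProbabilityMeasure P]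
    {H : Type*} [NormedAddCommGroup H] [InnerProductSpace ℝ H] [CompleteSpace H]
    (T : ℕ)
    (ℱ : Filtration ℕ m0)
    (X : ℕ → Ω → H)
    (hadapt : ∀ t, 1 ≤ t → t ≤ T → StronglyMeasurable[ℱ t] (X t))
    (hint : ∀ t, 1 ≤ t → t ≤ T → Integrable (X t) P)
    (hmds : ∀ t, 1 ≤ t → t ≤ T → P[X t | ℱ (t - 1)] =ᵐ[P] 0)
    (R : ℕ → ℝ)
    (hbd : ∀ t, 1 ≤ t → t ≤ T → ∀ᵐ ω ∂P, ‖X t ω‖ ≤ R t)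
    (δ : ℝ) (hδ : δ ∈ Set.Ioo (0 : ℝ) 1)
    (t : ℕ) (htT : t ≤ T) :
    ENNReal.ofReal (1 - δ) ≤
      P {ω | ‖∑ s ∈ Finset.Icc 1 t, X s ω‖ ≤
        4 * Real.sqrt (Real.log (2 / δ) * ∑ s ∈ Finset.Icc 1 T, R s ^ 2)} := by
  obtain ⟨hδ0, hδ1⟩ := hδ
  set L := log (2 / δ)
  set V := ∑ s ∈ Icc 1 T, R s ^ 2
  have hL : 0 < L := log_pos (by rw [lt_div_iff₀ hδ0]; linarith)
  refine ofReal_one_sub_le_measure ?_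
  rw [Set.compl_ofPred]
  rcases (sum_nonneg fun s _ ↦ sq_nonneg (R s) : 0 ≤ V).eq_or_lt with hV | hV
  · have hS := ae_sum_Icc_eq_zero hbd hV.symm htT
    rw [measureReal_def, ae_iff.1 (hS.mono fun ω h ↦ by rw [h, norm_zero]; positivity)]
    simpa using hδ0.le
  simp only [not_le]
  calc P.real {ω | 4 * √(L * V) < ‖∑ s ∈ Icc 1 t, X s ω‖}
      ≤ 2 * exp (√(L / V) ^ 2 * V / 2 - √(L / V) * (4 * √(L * V))) :=
        measureReal_lt_norm_sum_le hadapt hint hmds hbd (sqrt_nonneg _) (by positivity) htT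
    _ ≤ 2 * exp (-L) := by gcongr; exact sqrt_div_sq_mul_div_two_sub_le_neg hL.le hV
    _ = δ := by rw [exp_neg, exp_log (by positivity), inv_div]; ring

/-- High-probability bound (Azuma-type) for the norm of partial sums of a
bounded Hilbert-space-valued martingale difference sequence. -/
theorem stmt_8 {Ω : Type*} {m0 : MeasurableSpace Ω} {P : Measure Ω} [IsProbabilityMeasure P]
    {H : Type*} [NormedAddCommGroup H] [InnerProductSpace ℝ H] [CompleteSpace H]
    (T : ℕ) (hT : 1 ≤ T)
    (ℱ : Filtration ℕ m0) (hF0 : ℱ 0 = ⊥)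
    (X : ℕ → Ω → H)
    (hadapt : ∀ t, 1 ≤ t → t ≤ T → StronglyMeasurable[ℱ t] (X t))
    (hint : ∀ t, 1 ≤ t → t ≤ T → Integrable (X t) P)
    (hmds : ∀ t, 1 ≤ t → t ≤ T → P[X t | ℱ (t - 1)] =ᵐ[P] 0)
    (R : ℕ → ℝ) (hR : ∀ t, 0 ≤ R t)
    (hbd : ∀ t, 1 ≤ t → t ≤ T → ∀ᵐ ω ∂P, ‖X t ω‖ ≤ R t)
    (δ : ℝ) (hδ : δ ∈ Set.Ioo (0 : ℝ) 1)
    (t : ℕ) (ht1 : 1 ≤ t) (htT : t ≤ T) :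
    ENNReal.ofReal (1 - δ) ≤
      P {ω | ‖∑ s ∈ Finset.Icc 1 t, X s ω‖ ≤
        4 * Real.sqrt (Real.log (2 / δ) * ∑ s ∈ Finset.Icc 1 T, R s ^ 2)} :=
  stmt_8_general T ℱ X hadapt hint hmds R hbd δ hδ t htT
end
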